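/- Let P be a Markov kernel on ℝ^d, f : ℝ^d → (0,∞) bounded measurable, γ > 1, and suppose we have random variables X_T, Y_T on a probability space with law(X_T) having density given by P(x,·) under ℙ, a nonnegative random variable R_T with E R_T = 1 such that law(Y_T) under R_T ℙ is P(y,·), and X_T = Y_T ℙ-a.s. Then (P f(y))^γ = (E[R_T f(Y_T)])^γ ≤ (E R_T^{γ/(γ−1)})^{γ−1} · E f^γ(X_T) = (E R_T^{γ/(γ−1)})^{γ−1} · P f^γ(x). -/

import Mathlib

/-!
Under the change of measure `R • μ` the variable `Y` has law `P y`, so `P f (y) = 𝔼[R f(Y)]`.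
Hölder's inequality with the conjugate exponents `γ / (γ - 1)` and `γ` bounds the `γ`-th power of
this by `(𝔼 R^{γ/(γ-1)})^{γ-1} 𝔼 f(Y)^γ`, and since `Y = X` almost surely under `μ`, where `X` has
law `P x`, the last factor is `P f^γ (x)`.
-/

open MeasureTheory ProbabilityTheory

section

variable {Ω : Type*} [MeasurableSpace Ω] {μ : Measure Ω}

lemma memLp_ofReal_of_integrable_rpow {R : Ω → ℝ} {p : ℝ} (hp : 0 < p)
    (hR : AEStronglyMeasurable R μ) (hR_nonneg : ∀ ω, 0 ≤ R ω)
    (hint : Integrable (fun ω => R ω ^ p) μ) : MemLp R (ENNReal.ofReal p) μ := by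
  refine (integrable_norm_rpow_iff hR (by simpa using hp) ENNReal.ofReal_ne_top).1 ?_
  simpa only [ENNReal.toReal_ofReal hp.le, Real.norm_of_nonneg (hR_nonneg _)] using hint

lemma integral_withDensity_ofReal_eq_integral_mul {R : Ω → ℝ} (hR : Measurable R)
    (hR_nonneg : 0 ≤ᵐ[μ] R) (g : Ω → ℝ) :
    ∫ ω, g ω ∂μ.withDensity (fun ω => ENNReal.ofReal (R ω)) = ∫ ω, R ω * g ω ∂μ := by
  rw [integral_withDensity_eq_integral_toReal_smul hR.ennreal_ofReal
    (.of_forall fun _ => ENNReal.ofReal_lt_top)]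
  refine integral_congr_ae ?_
  filter_upwards [hR_nonneg] with ω hω
  rw [ENNReal.toReal_ofReal hω, smul_eq_mul]

lemma integral_mul_rpow_le {R g : Ω → ℝ} {γ : ℝ} (hγ : 1 < γ) (hR : 0 ≤ᵐ[μ] R)
    (hg : 0 ≤ᵐ[μ] g) (hRp : MemLp R (ENNReal.ofReal (γ / (γ - 1))) μ)
    (hgγ : MemLp g (ENNReal.ofReal γ) μ) :
    (∫ ω, R ω * g ω ∂μ) ^ γ ≤ (∫ ω, R ω ^ (γ / (γ - 1)) ∂μ) ^ (γ - 1) * ∫ ω, g ω ^ γ ∂μ := by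
  have hpq : (γ / (γ - 1)).HolderConjugate γ :=
    ((Real.holderConjugate_iff_eq_conjExponent hγ).2 rfl).symm
  have hRg : 0 ≤ ∫ ω, R ω * g ω ∂μ :=
    integral_nonneg_of_ae (by filter_upwards [hR, hg] with ω h₁ h₂ using mul_nonneg h₁ h₂)
  have hRp_nonneg : 0 ≤ ∫ ω, R ω ^ (γ / (γ - 1)) ∂μ :=
    integral_nonneg_of_ae (by filter_upwards [hR] with ω h using Real.rpow_nonneg h _)
  have hgγ_nonneg : 0 ≤ ∫ ω, g ω ^ γ ∂μ :=
    integral_nonneg_of_ae (by filter_upwards [hg] with ω h using Real.rpow_nonneg h _)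
  calc (∫ ω, R ω * g ω ∂μ) ^ γ
      ≤ ((∫ ω, R ω ^ (γ / (γ - 1)) ∂μ) ^ (1 / (γ / (γ - 1))) * (∫ ω, g ω ^ γ ∂μ) ^ (1 / γ)) ^ γ :=
        Real.rpow_le_rpow hRg (integral_mul_le_Lp_mul_Lq_of_nonneg hpq hR hg hRp hgγ) hpq.symm.nonneg
    _ = (∫ ω, R ω ^ (γ / (γ - 1)) ∂μ) ^ (γ - 1) * ∫ ω, g ω ^ γ ∂μ := by
        have hexp : 1 / (γ / (γ - 1)) * γ = γ - 1 := by field_simp [hpq.symm.ne_zero]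
        rw [Real.mul_rpow (Real.rpow_nonneg hRp_nonneg _) (Real.rpow_nonneg hgγ_nonneg _),
          ← Real.rpow_mul hRp_nonneg, ← Real.rpow_mul hgγ_nonneg, hexp,
          one_div_mul_cancel hpq.symm.ne_zero, Real.rpow_one]

lemma integral_comp_eq_of_map_eq_of_ae_eq {E : Type*} [MeasurableSpace E] {X Y : Ω → E}
    {ν : Measure E} (hX : AEMeasurable X μ) (hlaw : μ.map X = ν) (hXY : X =ᵐ[μ] Y)
    {g : E → ℝ} (hg : AEStronglyMeasurable g ν) : ∫ ω, g (Y ω) ∂μ = ∫ z, g z ∂ν := by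
  subst hlaw
  rw [integral_map hX hg]
  exact integral_congr_ae (hXY.mono fun ω h => by simp only [h])

end

theorem stmt_15_general (d : ℕ)
    (P : Kernel (EuclideanSpace ℝ (Fin d)) (EuclideanSpace ℝ (Fin d)))
    (f : EuclideanSpace ℝ (Fin d) → ℝ) (hf_meas : Measurable f)
    (hf_pos : ∀ z, 0 < f z) (Cf : ℝ) (hf_bd : ∀ z, f z ≤ Cf)
    (γ : ℝ) (hγ : 1 < γ)
    {Ω : Type*} [MeasurableSpace Ω] (μ : Measure Ω) [IsProbabilityMeasure μ]
    (X Y : Ω → EuclideanSpace ℝ (Fin d)) (hX : Measurable X) (hY : Measurable Y)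
    (R : Ω → ℝ) (hR_meas : Measurable R) (hR_nonneg : ∀ ω, 0 ≤ R ω)
    (hR_pow_int : Integrable (fun ω => R ω ^ (γ/(γ-1))) μ)
    (x y : EuclideanSpace ℝ (Fin d))
    (hXlaw : Measure.map X μ = P x)
    (hYlaw : Measure.map Y (μ.withDensity (fun ω => ENNReal.ofReal (R ω))) = P y)
    (hcouple : X =ᵐ[μ] Y) :
    (∫ z, f z ∂(P y)) ^ γ ≤
      (∫ ω, R ω ^ (γ/(γ-1)) ∂μ) ^ (γ - 1) * ∫ z, f z ^ γ ∂(P x) := by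
  have hRp : MemLp R (ENNReal.ofReal (γ / (γ - 1))) μ :=
    memLp_ofReal_of_integrable_rpow (div_pos (by linarith) (by linarith))
      hR_meas.aestronglyMeasurable hR_nonneg hR_pow_int
  have hfY : MemLp (fun ω => f (Y ω)) (ENNReal.ofReal γ) μ :=
    .of_bound (hf_meas.comp hY).aestronglyMeasurable Cf
      (.of_forall fun ω => by simpa [abs_of_pos (hf_pos _)] using hf_bd (Y ω))
  calc (∫ z, f z ∂(P y)) ^ γ = (∫ ω, R ω * f (Y ω) ∂μ) ^ γ := by
        rw [← hYlaw, integral_map hY.aemeasurable hf_meas.aestronglyMeasurable,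
          integral_withDensity_ofReal_eq_integral_mul hR_meas (.of_forall hR_nonneg)]
    _ ≤ (∫ ω, R ω ^ (γ/(γ-1)) ∂μ) ^ (γ - 1) * ∫ ω, f (Y ω) ^ γ ∂μ :=
        integral_mul_rpow_le hγ (.of_forall hR_nonneg) (.of_forall fun _ => (hf_pos _).le) hRp hfY
    _ = (∫ ω, R ω ^ (γ/(γ-1)) ∂μ) ^ (γ - 1) * ∫ z, f z ^ γ ∂(P x) := by
        rw [integral_comp_eq_of_map_eq_of_ae_eq hX.aemeasurable hXlaw hcouple
          (hf_meas.pow_const γ).aestronglyMeasurable]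

theorem stmt_15 (d : ℕ)
    (P : Kernel (EuclideanSpace ℝ (Fin d)) (EuclideanSpace ℝ (Fin d)))
    [IsMarkovKernel P]
    (f : EuclideanSpace ℝ (Fin d) → ℝ) (hf_meas : Measurable f)
    (hf_pos : ∀ z, 0 < f z) (Cf : ℝ) (hf_bd : ∀ z, f z ≤ Cf)
    (γ : ℝ) (hγ : 1 < γ)
    {Ω : Type*} [MeasurableSpace Ω] (μ : Measure Ω) [IsProbabilityMeasure μ]
    (X Y : Ω → EuclideanSpace ℝ (Fin d)) (hX : Measurable X) (hY : Measurable Y)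
    (R : Ω → ℝ) (hR_meas : Measurable R) (hR_nonneg : ∀ ω, 0 ≤ R ω)
    (hR_int : Integrable R μ) (hR_mean : ∫ ω, R ω ∂μ = 1)
    (hR_pow_int : Integrable (fun ω => R ω ^ (γ/(γ-1))) μ)
    (x y : EuclideanSpace ℝ (Fin d))
    (hXlaw : Measure.map X μ = P x)
    (hYlaw : Measure.map Y (μ.withDensity (fun ω => ENNReal.ofReal (R ω))) = P y)
    (hcouple : X =ᵐ[μ] Y) :
    (∫ z, f z ∂(P y)) ^ γ ≤
      (∫ ω, R ω ^ (γ/(γ-1)) ∂μ) ^ (γ - 1) * ∫ z, f z ^ γ ∂(P x) :=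
  stmt_15_general d P f hf_meas hf_pos Cf hf_bd γ hγ μ X Y hX hY R hR_meas hR_nonneg hR_pow_int x y
    hXlaw hYlaw hcouple
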